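/- arXiv:1611.10234 — 3 statements merged into one kernel-verified Lean document; each statement's English description precedes it below -/
import Mathlib

section
/- Let f be a starlike function on the unit disk. Then the image f(𝔻) contains the open ball of radius 1/4 centered at 0. -/
open Complex Metric Set

/-!
Write `f z = z * h z` with `h = dslope f 0`. Then `1 + z h'/h = z f'/f` has positive real part
and equals `1` at `0`, so its Cayley transform satisfies the Schwarz lemma, which yields
`Re (z h'/h) ≥ -2|z|/(1+|z|)`. Integrating `d/dt log |h (t z)|` along the radius gives
`|h z| ≥ 1/(1+|z|)²`, i.e. `|f z| ≥ |z|/(1+|z|)²`. So `f` maps the circle `|z| = r` outside the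
disc of radius `r/(1+r)²`, and by the open mapping theorem and connectedness that disc lies in
`f '' ball 0 r`; as `r → 1` the radius tends to `1/4`.
-/

theorem HasDerivAt.log_norm {γ : ℝ → ℂ} {γ' : ℂ} {t : ℝ} (hγ : HasDerivAt γ γ' t)
    (ht : γ t ≠ 0) : HasDerivAt (fun s ↦ Real.log ‖γ s‖) (γ' / γ t).re t := by
  have hsq := ((Real.hasDerivAt_log (by positivity : ‖γ t‖ ^ 2 ≠ 0)).comp t
    hγ.norm_sq).div_const 2
  have hlog : (fun s ↦ Real.log ‖γ s‖) = fun s ↦ Real.log (‖γ s‖ ^ 2) / 2 := by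
    ext s
    rw [Real.log_pow]
    ring
  rw [hlog]
  refine hsq.congr_deriv ?_
  rw [Complex.inner, div_re, ← normSq_eq_norm_sq]
  simp only [mul_re, conj_re, conj_im]
  field_simp
  ring

theorem Complex.norm_sub_one_lt_norm_add_one {w : ℂ} (hw : 0 < w.re) : ‖w - 1‖ < ‖w + 1‖ := by
  rw [← sq_lt_sq₀ (norm_nonneg _) (norm_nonneg _), ← normSq_eq_norm_sq,
    ← normSq_eq_norm_sq]
  simp only [normSq_apply, sub_re, sub_im, add_re,
    add_im, one_re, one_im]
  linarith

theorem Complex.one_sub_div_one_add_le_re {q : ℂ} {r : ℝ} (hq : ‖q‖ ≤ r) (hr : r < 1) :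
    (1 - r) / (1 + r) ≤ ((1 + q) / (1 - q)).re := by
  have hq0 : 0 ≤ ‖q‖ := norm_nonneg q
  have hsub : 0 < ‖1 - q‖ := norm_pos_iff.mpr fun h ↦ by
    rw [sub_eq_zero] at h; rw [← h, norm_one] at hq; linarith
  have hsub_le : ‖1 - q‖ ≤ 1 + r := (norm_sub_le _ _).trans (by rw [norm_one]; linarith)
  have hre : ((1 + q) / (1 - q)).re = (1 - ‖q‖ ^ 2) / ‖1 - q‖ ^ 2 := by
    rw [div_re, ← normSq_eq_norm_sq, ← normSq_eq_norm_sq,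
      normSq_apply, normSq_apply]
    simp only [add_re, add_im, sub_re, sub_im,
      one_re, one_im]
    ring
  calc (1 - r) / (1 + r) = (1 - r ^ 2) / (1 + r) ^ 2 := by
        field_simp [show 1 + r ≠ 0 by linarith]; ring
    _ ≤ (1 - ‖q‖ ^ 2) / ‖1 - q‖ ^ 2 := by
        apply div_le_div₀ (by nlinarith) (by nlinarith) (by positivity) (by gcongr)
    _ = _ := hre.symm

theorem one_sub_div_one_add_le_re_of_re_pos {P : ℂ → ℂ} (hP : DifferentiableOn ℂ P (ball 0 1))
    (hP0 : P 0 = 1) (hre : ∀ z ∈ ball (0 : ℂ) 1, 0 < (P z).re) {z : ℂ} (hz : z ∈ ball (0 : ℂ) 1) :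
    (1 - ‖z‖) / (1 + ‖z‖) ≤ (P z).re := by
  have hP1 : ∀ z ∈ ball (0 : ℂ) 1, P z + 1 ≠ 0 := fun z hz h ↦ by
    have := congrArg re h
    simp only [add_re, one_re, zero_re] at this
    linarith [hre z hz]
  set q : ℂ → ℂ := fun z ↦ (P z - 1) / (P z + 1)
  have hq_lt : ∀ z ∈ ball (0 : ℂ) 1, ‖q z‖ < 1 := fun z hz ↦ by
    rw [norm_div, div_lt_one (norm_pos_iff.2 (hP1 z hz))]
    exact norm_sub_one_lt_norm_add_one (hre z hz)
  have hq_le : ‖q z‖ ≤ ‖z‖ :=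
    Complex.norm_le_norm_of_mapsTo_ball ((hP.sub_const 1).div (hP.add_const 1) hP1)
      (fun w hw ↦ mem_closedBall_zero_iff.2 (hq_lt w hw).le) (by simp [q, hP0])
      (mem_ball_zero_iff.1 hz)
  have hPq : P z = (1 + q z) / (1 - q z) := by
    have := hP1 z hz
    simp only [q]
    field_simp
    ring
  rw [hPq]
  exact one_sub_div_one_add_le_re hq_le (mem_ball_zero_iff.1 hz)

theorem neg_two_mul_norm_div_le_re_of_re_pos {h : ℂ → ℂ} (hh : DifferentiableOn ℂ h (ball 0 1))
    (hne : ∀ z ∈ ball (0 : ℂ) 1, h z ≠ 0)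
    (hre : ∀ z ∈ ball (0 : ℂ) 1, 0 < (1 + z * deriv h z / h z).re)
    {z : ℂ} (hz : z ∈ ball (0 : ℂ) 1) : -(2 * ‖z‖) / (1 + ‖z‖) ≤ (z * deriv h z / h z).re := by
  have hP : DifferentiableOn ℂ (fun w ↦ 1 + w * deriv h w / h w) (ball 0 1) :=
    (differentiableOn_id.mul (hh.analyticOnNhd isOpen_ball).deriv.differentiableOn).div hh
      hne |>.const_add 1
  have := one_sub_div_one_add_le_re_of_re_pos hP (by simp) hre hz
  rw [add_re, one_re] at this
  calc -(2 * ‖z‖) / (1 + ‖z‖) = (1 - ‖z‖) / (1 + ‖z‖) - 1 := by field_simp; ring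
    _ ≤ _ := by linarith

theorem norm_div_one_add_norm_sq_le_norm {h : ℂ → ℂ} (hh : DifferentiableOn ℂ h (ball 0 1))
    (hne : ∀ z ∈ ball (0 : ℂ) 1, h z ≠ 0)
    (hlog : ∀ z ∈ ball (0 : ℂ) 1, -(2 * ‖z‖) / (1 + ‖z‖) ≤ (z * deriv h z / h z).re)
    {z : ℂ} (hz : z ∈ ball (0 : ℂ) 1) : ‖h 0‖ / (1 + ‖z‖) ^ 2 ≤ ‖h z‖ := by
  have hseg : ∀ t ∈ Icc (0 : ℝ) 1, (t : ℂ) * z ∈ ball (0 : ℂ) 1 := fun t ht ↦ by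
    rw [mem_ball_zero_iff, norm_mul, norm_real, Real.norm_of_nonneg ht.1]
    exact (mul_le_of_le_one_left (norm_nonneg z) ht.2).trans_lt (mem_ball_zero_iff.1 hz)
  set u : ℝ → ℝ := fun t ↦ Real.log ‖h (t * z)‖ + 2 * Real.log (1 + t * ‖z‖)
  have hu : ∀ t ∈ Icc (0 : ℝ) 1, HasDerivAt u
      ((z * deriv h (t * z) / h (t * z)).re + 2 * (‖z‖ / (1 + t * ‖z‖))) t := fun t ht ↦ by
    have hpath : HasDerivAt (fun s : ℝ ↦ h (s * z)) (z * deriv h (t * z)) t := by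
      have := (hh.differentiableAt (isOpen_ball.mem_nhds (hseg t ht))).hasDerivAt.comp
        (t : ℂ) ((hasDerivAt_id (t : ℂ)).mul_const z)
      simpa [mul_comm] using this.comp_ofReal
    have hlin : HasDerivAt (fun s : ℝ ↦ 1 + s * ‖z‖) ‖z‖ t := by
      simpa using ((hasDerivAt_id t).mul_const ‖z‖).const_add 1
    exact (hpath.log_norm (hne _ (hseg t ht))).add
      ((hlin.log (by nlinarith [ht.1, norm_nonneg z])).const_mul 2)
  have hmono : MonotoneOn u (Icc 0 1) := by
    refine monotoneOn_of_hasDerivWithinAt_nonneg (convex_Icc 0 1)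
      (fun t ht ↦ (hu t ht).continuousAt.continuousWithinAt)
      (fun t ht ↦ (hu t (interior_subset ht)).hasDerivWithinAt) fun t ht ↦ ?_
    rw [interior_Icc] at ht
    have hw := hlog _ (hseg t (Ioo_subset_Icc_self ht))
    have hnorm : ‖(t : ℂ) * z‖ = t * ‖z‖ := by
      rw [norm_mul, norm_real, Real.norm_of_nonneg ht.1.le]
    rw [hnorm, mul_assoc, mul_div_assoc, re_ofReal_mul] at hw
    refine (mul_nonneg_iff_of_pos_left ht.1).1 ?_
    calc 0 ≤ t * (z * deriv h (t * z) / h (t * z)).re + 2 * (t * ‖z‖) / (1 + t * ‖z‖) := by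
          rw [neg_div] at hw; linarith
      _ = _ := by ring
  have hu01 := hmono (left_mem_Icc.2 zero_le_one) (right_mem_Icc.2 zero_le_one) zero_le_one
  simp only [u, ofReal_zero, ofReal_one, zero_mul, one_mul, add_zero, Real.log_one,
    mul_zero] at hu01
  have hh0 : 0 < ‖h 0‖ := norm_pos_iff.2 (hne 0 (mem_ball_self one_pos))
  have hhz : 0 < ‖h z‖ := norm_pos_iff.2 (hne z hz)
  rw [div_le_iff₀ (by positivity), ← Real.log_le_log_iff hh0 (by positivity), Real.log_mul
    hhz.ne' (by positivity), Real.log_pow]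
  push_cast
  linarith

theorem norm_div_one_add_norm_sq_le_norm_of_starlike {f : ℂ → ℂ}
    (hf : DifferentiableOn ℂ f (ball 0 1)) (h0 : f 0 = 0) (h1 : deriv f 0 = 1)
    (hnz : ∀ z ∈ ball (0 : ℂ) 1, z ≠ 0 → f z ≠ 0)
    (hre : ∀ z ∈ ball (0 : ℂ) 1, z ≠ 0 → 0 < (z * deriv f z / f z).re)
    {z : ℂ} (hz : z ∈ ball (0 : ℂ) 1) : ‖z‖ / (1 + ‖z‖) ^ 2 ≤ ‖f z‖ := by
  set h := dslope f 0
  have hfh : ∀ w, f w = w * h w := fun w ↦ by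
    simpa [h0, smul_eq_mul] using (sub_smul_dslope f 0 w).symm
  have hh : DifferentiableOn ℂ h (ball 0 1) :=
    (differentiableOn_dslope (ball_mem_nhds _ one_pos)).2 hf
  have hh0 : h 0 = 1 := by simp [h, dslope_same, h1]
  have hne : ∀ w ∈ ball (0 : ℂ) 1, h w ≠ 0 := fun w hw hhw ↦ by
    rcases eq_or_ne w 0 with rfl | hw0
    · simp [hh0] at hhw
    · exact hnz w hw hw0 <| by rw [hfh, hhw, mul_zero]
  have hderiv : ∀ w ∈ ball (0 : ℂ) 1, deriv f w = h w + w * deriv h w := fun w hw ↦ by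
    simpa using (((hasDerivAt_id' w).mul (hh.differentiableAt
      (isOpen_ball.mem_nhds hw)).hasDerivAt).congr_of_eventuallyEq (.of_forall hfh)).deriv
  have hre' : ∀ w ∈ ball (0 : ℂ) 1, 0 < (1 + w * deriv h w / h w).re := fun w hw ↦ by
    rcases eq_or_ne w 0 with rfl | hw0
    · simp
    · convert hre w hw hw0 using 2
      rw [hfh w, hderiv w hw]
      field_simp [hne w hw]
  have := norm_div_one_add_norm_sq_le_norm hh hne
    (fun w hw ↦ neg_two_mul_norm_div_le_re_of_re_pos hh hne hre' hw) hz
  rw [hh0, norm_one] at this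
  rw [hfh, norm_mul, ← mul_one_div]
  exact mul_le_mul_of_nonneg_left this (norm_nonneg z)

theorem exists_mem_Ioo_lt_div_one_add_sq {c : ℝ} (hc0 : 0 ≤ c) (hc : c < 1 / 4) :
    ∃ r ∈ Ioo (0 : ℝ) 1, c < r / (1 + r) ^ 2 := by
  refine ⟨(1 + 4 * c) / 2, ⟨by linarith, by linarith⟩, ?_⟩
  rw [lt_div_iff₀ (by positivity)]
  nlinarith [mul_pos (by linarith : 0 < 1 - 4 * c) (by positivity : 0 < 2 + 7 * c + 4 * c ^ 2)]

-- `DiffContOnCl.ball_subset_image_closedBall` only gives the radius `ε / 2`.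
theorem DiffContOnCl.ball_subset_image_ball {f : ℂ → ℂ} {z₀ : ℂ} {r ε : ℝ}
    (h : DiffContOnCl ℂ f (ball z₀ r)) (hr : 0 < r)
    (hf : ∀ z ∈ sphere z₀ r, ε ≤ ‖f z - f z₀‖) : ball (f z₀) ε ⊆ f '' ball z₀ r := by
  rcases le_or_gt ε 0 with hε | hε
  · simp [ball_eq_empty.2 hε]
  have hK : IsCompact (f '' closedBall z₀ r) :=
    (isCompact_closedBall z₀ r).image_of_continuousOn h.continuousOn_ball
  have hopen : IsOpen (f '' ball z₀ r) := by
    rcases (h.differentiableOn.analyticOnNhd isOpen_ball).is_constant_or_isOpen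
      (convex_ball z₀ r).isPreconnected with ⟨c, hc⟩ | hopen
    · have hconst : EqOn f (fun _ ↦ c) (closedBall z₀ r) :=
        EqOn.of_subset_closure hc h.continuousOn_ball continuousOn_const ball_subset_closedBall
          (closure_ball z₀ hr.ne').ge
      obtain ⟨z, hz⟩ := (NormedSpace.sphere_nonempty.2 hr.le : (sphere z₀ r).Nonempty)
      have := hf z hz
      rw [hconst (sphere_subset_closedBall hz), hconst (mem_closedBall_self hr.le), sub_self,
        norm_zero] at this
      linarith
    · exact hopen _ subset_rfl isOpen_ball
  have hcover : ball (f z₀) ε ⊆ f '' ball z₀ r ∪ (f '' closedBall z₀ r)ᶜ := by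
    intro y hy
    rw [mem_union, or_iff_not_imp_right, mem_compl_iff, not_not]
    rintro ⟨z, hz, rfl⟩
    refine ⟨z, (mem_closedBall.1 hz).lt_of_ne fun hzr ↦ ?_, rfl⟩
    have := hf z (mem_sphere.2 hzr)
    rw [mem_ball, dist_eq_norm] at hy
    linarith
  exact (convex_ball (f z₀) ε).isPreconnected.subset_left_of_subset_union hopen
    hK.isClosed.isOpen_compl (disjoint_compl_right.mono_left (image_mono ball_subset_closedBall))
    hcover ⟨f z₀, mem_ball_self hε, mem_image_of_mem f (mem_ball_self hr)⟩

theorem stmt11 (f : ℂ → ℂ)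
    (hf : DifferentiableOn ℂ f (ball (0:ℂ) 1))
    (h0 : f 0 = 0) (h1 : deriv f 0 = 1)
    (hnz : ∀ z ∈ ball (0:ℂ) 1, z ≠ 0 → f z ≠ 0)
    (hre : ∀ z ∈ ball (0:ℂ) 1, z ≠ 0 → 0 < (z * deriv f z / f z).re) :
    ball (0:ℂ) (1/4) ⊆ f '' ball (0:ℂ) 1 := by
  intro w hw
  obtain ⟨r, ⟨hr0, hr1⟩, hwr⟩ :=
    exists_mem_Ioo_lt_div_one_add_sq (norm_nonneg w) (mem_ball_zero_iff.1 hw)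
  have hsphere : ∀ z ∈ sphere (0 : ℂ) r, r / (1 + r) ^ 2 ≤ ‖f z - f 0‖ := fun z hz ↦ by
    rw [h0, sub_zero, ← mem_sphere_zero_iff_norm.1 hz]
    exact norm_div_one_add_norm_sq_le_norm_of_starlike hf h0 h1 hnz hre
      (sphere_subset_ball hr1 hz)
  have hcl : DiffContOnCl ℂ f (ball 0 r) := hf.diffContOnCl_ball (closedBall_subset_ball hr1)
  have hball := hcl.ball_subset_image_ball hr0 hsphere
  rw [h0] at hball
  exact image_mono (ball_subset_ball hr1.le) (hball (mem_ball_zero_iff.2 hwr))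
end

section
/- Let m ≥ 1 and let f(z) = z + Σ_{n≥m+1} aₙ zⁿ be holomorphic on the unit disk with Re(1 + z f''(z)/f'(z)) > 0 on 𝔻 (so z f'(z) is starlike). Then 1/(1+|z|^m)^{2/m} ≤ |f'(z)| ≤ 1/(1−|z|^m)^{2/m} for all z ∈ 𝔻. -/
/-!
Write `g = f'` and `p = 1 + z g'/g`. Near a zero `z₀ ≠ 0` of `g` of order `n`, the real part of
`z g'/g = n z/(z - z₀) + O(1)` is unbounded below, so `Re p > 0` forces `g` to be zero-free on the
disc (the hypothesis says nothing at a zero of `g`, where Lean reads `g'/g` as `0`). Hence `p` is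
holomorphic with positive real part and `p - 1 = O(|z|^m)`; its Cayley transform `(p - 1)/(p + 1)`
maps the disc into itself and vanishes to order `m` at `0`, so by the Schwarz lemma it is bounded
by `|z|^m`, which gives `(1 - r^m)/(1 + r^m) ≤ Re p ≤ (1 + r^m)/(1 - r^m)` for `r = |z|`. Finally
`d/dt log |g(t e^{iθ})| = (Re p - 1)/t`, and integrating along the radius gives
`-(2/m) log (1 + r^m) ≤ log |g| ≤ -(2/m) log (1 - r^m)`.
-/

open Complex Metric Set
open Function Filter Topology Asymptotics

theorem frequently_re_div_sub_lt {z₀ : ℂ} (hz₀ : z₀ ≠ 0) (C : ℝ) :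
    ∃ᶠ z in 𝓝[≠] z₀, (z / (z - z₀)).re < C := by
  set c : ℝ → ℂ := fun t => ((1 - t : ℝ) : ℂ) * z₀
  have hc : Tendsto c (𝓝[>] 0) (𝓝[≠] z₀) := by
    refine tendsto_nhdsWithin_iff.mpr ⟨?_, ?_⟩
    · have : Continuous c := by fun_prop
      simpa [c] using (this.tendsto 0).mono_left nhdsWithin_le_nhds
    · filter_upwards [self_mem_nhdsWithin] with t (ht : 0 < t)
      simp [c, hz₀, ht.ne']
  have hray : ∀ t : ℝ, 0 < t → (c t / (c t - z₀)).re = 1 - t⁻¹ := by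
    intro t ht
    have ht' : (t : ℂ) ≠ 0 := ofReal_ne_zero.mpr ht.ne'
    have hsub : c t - z₀ = -t * z₀ := by simp only [c]; push_cast; ring
    have : c t / (c t - z₀) = ((1 - t⁻¹ : ℝ) : ℂ) := by
      rw [hsub]
      simp only [c]
      push_cast
      field_simp
      ring
    rw [this, ofReal_re]
  have hbot : Tendsto (fun t : ℝ => 1 - t⁻¹) (𝓝[>] 0) atBot :=
    tendsto_atBot_add_const_left _ _ (tendsto_neg_atTop_atBot.comp tendsto_inv_nhdsGT_zero)
  have hev : ∀ᶠ t in 𝓝[>] (0 : ℝ), (c t / (c t - z₀)).re < C := by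
    filter_upwards [hbot.eventually_lt_atBot C, self_mem_nhdsWithin] with t hC (ht : 0 < t)
    rwa [hray t ht]
  exact hc.frequently hev.frequently

theorem AnalyticAt.frequently_re_mul_logDeriv_lt {g : ℂ → ℂ} {z₀ : ℂ} (hg : AnalyticAt ℂ g z₀)
    (hz₀ : z₀ ≠ 0) (hgz₀ : g z₀ = 0) (hg_ne : ¬∀ᶠ z in 𝓝 z₀, g z = 0) (C : ℝ) :
    ∃ᶠ z in 𝓝 z₀, (z * logDeriv g z).re < C := by
  obtain ⟨n, h, hh, hhz₀, hgh⟩ := hg.exists_eventuallyEq_pow_smul_nonzero_iff.mpr hg_ne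
  have hn : (0 : ℝ) < n := by
    refine Nat.cast_pos.mpr (Nat.pos_of_ne_zero fun hn => hhz₀ ?_)
    simpa [hn, hgz₀, eq_comm] using hgh.self_of_nhds
  have hlog : ∀ᶠ z in 𝓝[≠] z₀, z * logDeriv g z = n * (z / (z - z₀)) + z * logDeriv h z := by
    filter_upwards [nhdsWithin_le_nhds (EventuallyEq.eventuallyEq_nhds hgh),
      nhdsWithin_le_nhds hh.eventually_analyticAt,
      nhdsWithin_le_nhds (hh.continuousAt.eventually_ne hhz₀), self_mem_nhdsWithin]
      with z hgz hhz hhz_ne (hz : z ≠ z₀)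
    simp only [(logDeriv_congr_nhds hgz).self_of_nhds, smul_eq_mul]
    rw [logDeriv_mul (f := fun z => (z - z₀) ^ n) z (pow_ne_zero _ (sub_ne_zero.mpr hz)) hhz_ne
      (by fun_prop) hhz.differentiableAt, logDeriv_fun_pow (by fun_prop)]
    simp only [logDeriv_apply, deriv_sub_const, deriv_id'']
    ring
  set K := (z₀ * logDeriv h z₀).re
  have hbdd : ∀ᶠ z in 𝓝 z₀, (z * logDeriv h z).re < K + 1 := by
    have : ContinuousAt (fun z => (z * logDeriv h z).re) z₀ :=
      continuous_re.continuousAt.comp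
        (continuousAt_id.mul (hh.deriv.continuousAt.div hh.continuousAt hhz₀))
    exact this.eventually (Iio_mem_nhds (lt_add_one K))
  refine Frequently.filter_mono ?_ (nhdsWithin_le_nhds (s := {z₀}ᶜ))
  refine ((frequently_re_div_sub_lt hz₀ ((C - (K + 1)) / n)).and_eventually
    (hlog.and (nhdsWithin_le_nhds hbdd))).mono fun z ⟨hz, hlog_z, hbdd_z⟩ => ?_
  rw [hlog_z, add_re, ← ofReal_natCast, re_ofReal_mul]
  rw [lt_div_iff₀ hn] at hz
  linarith

theorem AnalyticOnNhd.ne_zero_of_le_re_mul_logDeriv {g : ℂ → ℂ} {U : Set ℂ}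
    (hg : AnalyticOnNhd ℂ g U) (hU : IsPreconnected U) (hUo : IsOpen U) (h0 : 0 ∈ U)
    (hg0 : g 0 ≠ 0) {C : ℝ} (hC : ∀ z ∈ U, C ≤ (z * logDeriv g z).re) :
    ∀ z ∈ U, g z ≠ 0 := by
  intro z hz hgz
  have hz₀ : z ≠ 0 := by rintro rfl; exact hg0 hgz
  have hg_ne : ¬∀ᶠ w in 𝓝 z, g w = 0 := fun hev =>
    hg0 (hg.eqOn_zero_of_preconnected_of_eventuallyEq_zero hU hz hev h0)
  obtain ⟨w, hwC, hwU⟩ :=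
    ((hg z hz).frequently_re_mul_logDeriv_lt hz₀ hgz hg_ne C).and_eventually
      (hUo.mem_nhds hz) |>.exists
  exact (hC w hwU).not_gt hwC

theorem norm_sub_one_div_add_one_lt_one {p : ℂ} (hp : 0 < p.re) : ‖(p - 1) / (p + 1)‖ < 1 := by
  have hlt : ‖p - 1‖ < ‖p + 1‖ := by
    rw [← sq_lt_sq₀ (norm_nonneg _) (norm_nonneg _), ← normSq_eq_norm_sq, ← normSq_eq_norm_sq,
      normSq_apply, normSq_apply]
    simp only [sub_re, add_re, sub_im, add_im, one_re, one_im]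
    nlinarith
  rw [norm_div, div_lt_one ((norm_nonneg _).trans_lt hlt)]
  exact hlt

theorem re_one_add_div_one_sub_mem_Icc {w : ℂ} {t : ℝ} (hw : ‖w‖ ≤ t) (ht : t < 1) :
    ((1 + w) / (1 - w)).re ∈ Icc ((1 - t) / (1 + t)) ((1 + t) / (1 - t)) := by
  have hw1 : ‖w‖ < 1 := hw.trans_lt ht
  have hre : ((1 + w) / (1 - w)).re = (1 - ‖w‖ ^ 2) / ‖1 - w‖ ^ 2 := by
    rw [div_re, ← normSq_eq_norm_sq, ← normSq_eq_norm_sq, normSq_apply, normSq_apply]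
    simp only [add_re, add_im, sub_re, sub_im, one_re, one_im]
    ring
  have hlo : 1 - ‖w‖ ≤ ‖1 - w‖ := by simpa using norm_sub_norm_le (1 : ℂ) w
  have hhi : ‖1 - w‖ ≤ 1 + ‖w‖ := by simpa using norm_sub_le (1 : ℂ) w
  have hpos : 0 < 1 - ‖w‖ := by linarith
  rw [hre]
  constructor
  · calc (1 - t) / (1 + t) ≤ (1 - ‖w‖) / (1 + ‖w‖) := by
          rw [div_le_div_iff₀ (by linarith [norm_nonneg w]) (by linarith [norm_nonneg w])]
          nlinarith
      _ = (1 - ‖w‖ ^ 2) / (1 + ‖w‖) ^ 2 := by field_simp; ring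
      _ ≤ (1 - ‖w‖ ^ 2) / ‖1 - w‖ ^ 2 := by
          gcongr
          · nlinarith
          · exact pow_pos (hpos.trans_le hlo) 2
  · calc (1 - ‖w‖ ^ 2) / ‖1 - w‖ ^ 2 ≤ (1 - ‖w‖ ^ 2) / (1 - ‖w‖) ^ 2 := by
          gcongr
          nlinarith
      _ = (1 + ‖w‖) / (1 - ‖w‖) := by field_simp; ring
      _ ≤ (1 + t) / (1 - t) := by
          rw [div_le_div_iff₀ hpos (by linarith)]
          nlinarith

theorem re_mem_Icc_of_re_pos_of_isBigO {p : ℂ → ℂ} {m : ℕ} (hm : m ≠ 0)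
    (hp : DifferentiableOn ℂ p (ball 0 1)) (hre : ∀ z ∈ ball (0 : ℂ) 1, 0 < (p z).re)
    (hp1 : (fun z => p z - 1) =O[𝓝 0] fun z => ‖z‖ ^ m) :
    ∀ z ∈ ball (0 : ℂ) 1,
      (p z).re ∈ Icc ((1 - ‖z‖ ^ m) / (1 + ‖z‖ ^ m)) ((1 + ‖z‖ ^ m) / (1 - ‖z‖ ^ m)) := by
  have hp0 : p 0 = 1 :=
    sub_eq_zero.mp (IsBigO.eq_zero_of_norm_pow (x₀ := (0 : ℂ))
      (by simpa only [sub_zero] using hp1) hm)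
  have hne : ∀ z ∈ ball (0 : ℂ) 1, p z + 1 ≠ 0 := fun z hz h => by
    have := congrArg re h
    simp only [add_re, one_re, zero_re] at this
    linarith [hre z hz]
  set W : ℂ → ℂ := fun z => (p z - 1) / (p z + 1)
  have hW0 : W 0 = 0 := by simp [W, hp0]
  have hWd : DifferentiableOn ℂ W (ball 0 1) := (hp.sub_const 1).div (hp.add_const 1) hne
  have hmaps : MapsTo W (ball 0 1) (closedBall (W 0) 1) := fun z hz => by
    rw [hW0, mem_closedBall_zero_iff]
    exact (norm_sub_one_div_add_one_lt_one (hre z hz)).le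
  have ho : (fun z => W z - W 0) =o[𝓝 0] fun z => ‖z - 0‖ ^ (m - 1) := by
    have hinv : (fun z => (p z + 1)⁻¹) =O[𝓝 0] fun _ => (1 : ℝ) :=
      (((hp.continuousOn.continuousAt (ball_mem_nhds 0 one_pos)).add continuousAt_const).inv₀
        (by norm_num [hp0])).tendsto.isBigO_one ℝ
    have := (hp1.trans_isLittleO (isLittleO_norm_pow_norm_pow (Nat.sub_lt
      (Nat.pos_of_ne_zero hm) one_pos))).mul_isBigO hinv
    simpa [W, hp0, div_eq_mul_inv] using this
  intro z hz
  have hWz := Complex.dist_le_mul_div_pow_of_mapsTo_ball_of_isLittleO hWd hmaps ho hz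
  rw [hW0, Nat.sub_add_cancel (Nat.pos_of_ne_zero hm)] at hWz
  simp only [dist_zero_right, div_one, one_mul] at hWz
  have hpW : p z = (1 + W z) / (1 - W z) := by
    have h1 := hne z hz
    simp only [W]
    field_simp
    ring
  rw [hpW]
  exact re_one_add_div_one_sub_mem_Icc hWz
    (pow_lt_one₀ (norm_nonneg _) (mem_ball_zero_iff.mp hz) hm)

theorem AnalyticAt.isBigO_mul_logDeriv {g : ℂ → ℂ} {m : ℕ} (hg : AnalyticAt ℂ g 0)
    (hg0 : g 0 ≠ 0) (hvan : ∀ i, 0 < i → i < m → iteratedDeriv i g 0 = 0) :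
    (fun z => z * logDeriv g z) =O[𝓝 0] fun z => ‖z‖ ^ m := by
  have hlog : ContinuousAt (logDeriv g) 0 := hg.deriv.continuousAt.div hg.continuousAt hg0
  rcases m with _ | k
  · simpa using (continuousAt_id.mul hlog).tendsto.isBigO_one ℝ
  have horder : (k : ℕ∞) ≤ analyticOrderAt (deriv g) 0 :=
    (natCast_le_analyticOrderAt_iff_iteratedDeriv_eq_zero hg.deriv).mpr fun i hi => by
      rw [← iteratedDeriv_succ']
      exact hvan _ i.succ_pos (by omega)
  obtain ⟨v, hv, hgv⟩ := (natCast_le_analyticOrderAt hg.deriv).mp horder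
  have heq : (fun z => z * logDeriv g z) =ᶠ[𝓝 0] fun z => z ^ (k + 1) * (v z / g z) := by
    filter_upwards [hgv] with z hz
    rw [logDeriv_apply, hz, sub_zero, smul_eq_mul]
    ring
  have hq : (fun z => v z / g z) =O[𝓝 0] fun _ => (1 : ℝ) :=
    (hv.continuousAt.div hg.continuousAt hg0).tendsto.isBigO_one ℝ
  simpa using heq.trans_isBigO ((isBigO_refl (fun z : ℂ => z ^ (k + 1)) _).norm_right.mul hq)

theorem HasDerivAt.log_norm_s15 {G : ℝ → ℂ} {G' : ℂ} {t : ℝ} (hG : HasDerivAt G G' t)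
    (hG0 : G t ≠ 0) : HasDerivAt (fun s => Real.log ‖G s‖) (G' / G t).re t := by
  have hsq : ‖G t‖ ^ 2 ≠ 0 := by positivity
  have hlog : (fun s => Real.log ‖G s‖) = fun s => Real.log (‖G s‖ ^ 2) / 2 := by
    ext s
    rw [Real.log_pow]
    ring
  rw [hlog]
  refine ((hG.norm_sq.log hsq).div_const 2).congr_deriv ?_
  rw [Complex.inner, div_re, ← normSq_eq_norm_sq]
  simp only [mul_re, conj_re, conj_im]
  ring

theorem hasDerivAt_log_norm_comp_ofReal_mul {g : ℂ → ℂ} {e : ℂ} {t : ℝ}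
    (hg : DifferentiableAt ℂ g (t * e)) (hg0 : g (t * e) ≠ 0) :
    HasDerivAt (fun s : ℝ => Real.log ‖g (s * e)‖) (e * logDeriv g (t * e)).re t := by
  have hray : HasDerivAt (fun s : ℝ => g (s * e)) (deriv g (t * e) * e) t := by
    simpa using (hg.hasDerivAt.comp (t : ℂ) ((hasDerivAt_id (t : ℂ)).mul_const e)).comp_ofReal
  rw [logDeriv_apply, mul_div_assoc', mul_comm e]
  exact hray.log_norm_s15 hg0

theorem log_norm_sub_le_of_re_mul_logDeriv_le {g : ℂ → ℂ} {F F' : ℝ → ℝ}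
    (hg : DifferentiableOn ℂ g (ball 0 1)) (hne : ∀ z ∈ ball (0 : ℂ) 1, g z ≠ 0)
    (hF : ∀ t ∈ Ico (0 : ℝ) 1, HasDerivAt F (F' t) t)
    (hle : ∀ z ∈ ball (0 : ℂ) 1, z ≠ 0 → (z * logDeriv g z).re ≤ ‖z‖ * F' ‖z‖) :
    ∀ z ∈ ball (0 : ℂ) 1, Real.log ‖g z‖ - Real.log ‖g 0‖ ≤ F ‖z‖ - F 0 := by
  intro z hz
  rcases eq_or_ne z 0 with rfl | hz0
  · simp
  set r := ‖z‖
  have hr : 0 < r := norm_pos_iff.mpr hz0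
  have hr1 : r < 1 := mem_ball_zero_iff.mp hz
  set e : ℂ := z / r
  have hc_norm : ∀ t : ℝ, 0 ≤ t → ‖(t : ℂ) * e‖ = t := fun t ht => by
    rw [norm_mul, norm_div, norm_real, norm_real, Real.norm_of_nonneg ht,
      Real.norm_of_nonneg hr.le, div_self hr.ne', mul_one]
  have hc_mem : ∀ t ∈ Icc 0 r, (t : ℂ) * e ∈ ball (0 : ℂ) 1 := fun t ht => by
    rw [mem_ball_zero_iff, hc_norm t ht.1]
    exact ht.2.trans_lt hr1
  have hderiv : ∀ t ∈ Icc 0 r, HasDerivAt (fun t => F t - Real.log ‖g (t * e)‖)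
      (F' t - (e * logDeriv g (t * e)).re) t := fun t ht =>
    (hF t ⟨ht.1, ht.2.trans_lt hr1⟩).sub <| hasDerivAt_log_norm_comp_ofReal_mul
      (hg.differentiableAt (isOpen_ball.mem_nhds (hc_mem t ht))) (hne _ (hc_mem t ht))
  have hmono : MonotoneOn (fun t => F t - Real.log ‖g (t * e)‖) (Icc 0 r) := by
    refine monotoneOn_of_hasDerivWithinAt_nonneg (convex_Icc 0 r)
      (fun t ht => (hderiv t ht).continuousAt.continuousWithinAt)
      (fun t ht => (hderiv t (interior_subset ht)).hasDerivWithinAt) fun t ht => ?_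
    rw [interior_Icc] at ht
    have hle_t := hle _ (hc_mem t (Ioo_subset_Icc_self ht))
      (mul_ne_zero (ofReal_ne_zero.mpr ht.1.ne') (div_ne_zero hz0 (ofReal_ne_zero.mpr hr.ne')))
    rw [hc_norm t ht.1.le, mul_assoc, re_ofReal_mul] at hle_t
    exact sub_nonneg.mpr (le_of_mul_le_mul_left hle_t ht.1)
  have := hmono (left_mem_Icc.mpr hr.le) (right_mem_Icc.mpr hr.le) hr.le
  have hre : (r : ℂ) * e = z := mul_div_cancel₀ _ (ofReal_ne_zero.mpr hr.ne')
  simp only [ofReal_zero, zero_mul, hre] at this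
  linarith

theorem le_log_norm_sub_of_le_re_mul_logDeriv {g : ℂ → ℂ} {G G' : ℝ → ℝ}
    (hg : DifferentiableOn ℂ g (ball 0 1)) (hne : ∀ z ∈ ball (0 : ℂ) 1, g z ≠ 0)
    (hG : ∀ t ∈ Ico (0 : ℝ) 1, HasDerivAt G (G' t) t)
    (hle : ∀ z ∈ ball (0 : ℂ) 1, z ≠ 0 → ‖z‖ * G' ‖z‖ ≤ (z * logDeriv g z).re) :
    ∀ z ∈ ball (0 : ℂ) 1, G ‖z‖ - G 0 ≤ Real.log ‖g z‖ - Real.log ‖g 0‖ := by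
  have hinv : ∀ z ∈ ball (0 : ℂ) 1, logDeriv (fun w => (g w)⁻¹) z = -logDeriv g z :=
    fun z hz => by
      simpa using logDeriv_fun_zpow (hg.differentiableAt (isOpen_ball.mem_nhds hz)) (-1)
  intro z hz
  have := log_norm_sub_le_of_re_mul_logDeriv_le (g := fun w => (g w)⁻¹) (hg.inv hne)
    (fun z hz => inv_ne_zero (hne z hz)) (fun t ht => (hG t ht).neg) (fun w hw hw0 => by
      rw [hinv w hw, mul_neg, neg_re, mul_neg, neg_le_neg_iff]
      exact hle w hw hw0) z hz
  simp only [norm_inv, Real.log_inv, Pi.neg_apply] at this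
  linarith

theorem log_norm_sub_mem_Icc_of_re_mem_Icc {g : ℂ → ℂ} {m : ℕ} (hm : m ≠ 0)
    (hg : DifferentiableOn ℂ g (ball 0 1)) (hne : ∀ z ∈ ball (0 : ℂ) 1, g z ≠ 0)
    (hre : ∀ z ∈ ball (0 : ℂ) 1, (1 + z * logDeriv g z).re ∈
      Icc ((1 - ‖z‖ ^ m) / (1 + ‖z‖ ^ m)) ((1 + ‖z‖ ^ m) / (1 - ‖z‖ ^ m))) :
    ∀ z ∈ ball (0 : ℂ) 1, Real.log ‖g z‖ - Real.log ‖g 0‖ ∈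
      Icc (-(2 / m) * Real.log (1 + ‖z‖ ^ m)) (-(2 / m) * Real.log (1 - ‖z‖ ^ m)) := by
  have hm' : (m : ℝ) ≠ 0 := Nat.cast_ne_zero.mpr hm
  have hlt : ∀ t ∈ Ico (0 : ℝ) 1, t ^ m < 1 := fun t ht => pow_lt_one₀ ht.1 ht.2 hm
  have hlower : ∀ t ∈ Ico (0 : ℝ) 1, HasDerivAt (fun t => -(2 / m) * Real.log (1 + t ^ m))
      (-(2 * t ^ (m - 1)) / (1 + t ^ m)) t := fun t ht => by
    have h1 : 1 + t ^ m ≠ 0 := by positivity [ht.1]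
    refine ((((hasDerivAt_pow m t).const_add 1).log h1).const_mul _).congr_deriv ?_
    field_simp
  have hupper : ∀ t ∈ Ico (0 : ℝ) 1, HasDerivAt (fun t => -(2 / m) * Real.log (1 - t ^ m))
      (2 * t ^ (m - 1) / (1 - t ^ m)) t := fun t ht => by
    have h1 : 1 - t ^ m ≠ 0 := by linarith [hlt t ht]
    refine ((((hasDerivAt_pow m t).const_sub 1).log h1).const_mul _).congr_deriv ?_
    field_simp
  have hle_lower : ∀ w ∈ ball (0 : ℂ) 1, w ≠ 0 →
      ‖w‖ * (-(2 * ‖w‖ ^ (m - 1)) / (1 + ‖w‖ ^ m)) ≤ (w * logDeriv g w).re := fun w hw _ => by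
    have hw1 := (hre w hw).1
    rw [add_re, one_re] at hw1
    have h1 : 0 < 1 + ‖w‖ ^ m := by positivity
    calc ‖w‖ * (-(2 * ‖w‖ ^ (m - 1)) / (1 + ‖w‖ ^ m))
        = (1 - ‖w‖ ^ m) / (1 + ‖w‖ ^ m) - 1 := by
          rw [div_sub_one h1.ne', ← mul_pow_sub_one hm ‖w‖]; ring
      _ ≤ _ := by linarith
  have hle_upper : ∀ w ∈ ball (0 : ℂ) 1, w ≠ 0 →
      (w * logDeriv g w).re ≤ ‖w‖ * (2 * ‖w‖ ^ (m - 1) / (1 - ‖w‖ ^ m)) := fun w hw _ => by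
    have hw1 := (hre w hw).2
    rw [add_re, one_re] at hw1
    have h1 : 0 < 1 - ‖w‖ ^ m := by
      linarith [hlt ‖w‖ ⟨norm_nonneg w, mem_ball_zero_iff.mp hw⟩]
    calc (w * logDeriv g w).re ≤ (1 + ‖w‖ ^ m) / (1 - ‖w‖ ^ m) - 1 := by linarith
      _ = ‖w‖ * (2 * ‖w‖ ^ (m - 1) / (1 - ‖w‖ ^ m)) := by
          rw [div_sub_one h1.ne', ← mul_pow_sub_one hm ‖w‖]; ring
  intro z hz
  constructor
  · simpa [zero_pow hm] using le_log_norm_sub_of_le_re_mul_logDeriv hg hne hlower hle_lower z hz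
  · simpa [zero_pow hm] using log_norm_sub_le_of_re_mul_logDeriv_le hg hne hupper hle_upper z hz

theorem Real.log_one_div_rpow {a : ℝ} (ha : 0 < a) (c : ℝ) :
    Real.log (1 / a ^ c) = -c * Real.log a := by
  rw [one_div, Real.log_inv, Real.log_rpow ha, neg_mul]

theorem stmt15_general (m : ℕ) (hm : 1 ≤ m) (f : ℂ → ℂ)
    (hf : DifferentiableOn ℂ f (ball (0:ℂ) 1))
    (h1 : deriv f 0 = 1)
    (hvan : ∀ n : ℕ, 2 ≤ n → n ≤ m → iteratedDeriv n f 0 = 0)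
    (hconv : ∀ z ∈ ball (0:ℂ) 1, 0 < (1 + z * deriv (deriv f) z / deriv f z).re) :
    ∀ z ∈ ball (0:ℂ) 1,
      1 / (1 + ‖z‖ ^ m) ^ ((2:ℝ) / m) ≤ ‖deriv f z‖ ∧
      ‖deriv f z‖ ≤ 1 / (1 - ‖z‖ ^ m) ^ ((2:ℝ) / m) := by
  have hm0 : m ≠ 0 := Nat.one_le_iff_ne_zero.mp hm
  set g := deriv f with hg_def
  have hg : AnalyticOnNhd ℂ g (ball 0 1) := (hf.analyticOnNhd isOpen_ball).deriv
  have hre : ∀ z ∈ ball (0 : ℂ) 1, 0 < (1 + z * logDeriv g z).re := by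
    simpa only [logDeriv_apply, mul_div_assoc] using hconv
  have hne : ∀ z ∈ ball (0 : ℂ) 1, g z ≠ 0 :=
    hg.ne_zero_of_le_re_mul_logDeriv (convex_ball 0 1).isPreconnected isOpen_ball
      (mem_ball_self one_pos) (by simp [g, h1]) (C := -1) fun z hz => by
        linarith [hre z hz, show (1 + z * logDeriv g z).re = 1 + (z * logDeriv g z).re by simp]
  have hO : (fun z => z * logDeriv g z) =O[𝓝 0] fun z => ‖z‖ ^ m :=
    (hg 0 (mem_ball_self one_pos)).isBigO_mul_logDeriv (by simp [g, h1]) fun i hi him => by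
      rw [hg_def, ← iteratedDeriv_succ']
      exact hvan _ (by omega) (by omega)
  have hIcc := re_mem_Icc_of_re_pos_of_isBigO (p := fun z => 1 + z * logDeriv g z) hm0
    ((differentiableOn_id.mul (hg.deriv.differentiableOn.div hg.differentiableOn hne)).const_add 1)
    hre (by simpa using hO)
  intro z hz
  obtain ⟨hlo, hhi⟩ := log_norm_sub_mem_Icc_of_re_mem_Icc hm0 hg.differentiableOn hne hIcc z hz
  simp only [g, h1, norm_one, Real.log_one, sub_zero] at hlo hhi
  have hgz : 0 < ‖deriv f z‖ := norm_pos_iff.mpr (hne z hz)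
  have hlt : ‖z‖ ^ m < 1 := pow_lt_one₀ (norm_nonneg z) (mem_ball_zero_iff.mp hz) hm0
  constructor
  · rw [← Real.log_le_log_iff (by positivity) hgz, Real.log_one_div_rpow (by positivity)]
    exact hlo
  · have hpos : 0 < 1 - ‖z‖ ^ m := by linarith
    rw [← Real.log_le_log_iff hgz (one_div_pos.mpr (Real.rpow_pos_of_pos hpos _)),
      Real.log_one_div_rpow hpos]
    exact hhi

theorem stmt15 (m : ℕ) (hm : 1 ≤ m) (f : ℂ → ℂ)
    (hf : DifferentiableOn ℂ f (ball (0:ℂ) 1))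
    (h0 : f 0 = 0) (h1 : deriv f 0 = 1)
    (hvan : ∀ n : ℕ, 2 ≤ n → n ≤ m → iteratedDeriv n f 0 = 0)
    (hconv : ∀ z ∈ ball (0:ℂ) 1, 0 < (1 + z * deriv (deriv f) z / deriv f z).re) :
    ∀ z ∈ ball (0:ℂ) 1,
      1 / (1 + ‖z‖ ^ m) ^ ((2:ℝ) / m) ≤ ‖deriv f z‖ ∧
      ‖deriv f z‖ ≤ 1 / (1 - ‖z‖ ^ m) ^ ((2:ℝ) / m) :=
  stmt15_general m hm f hf h1 hvan hconv
end

section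
/- Let z₀, b be in the open unit disk and let f be holomorphic on the unit disk with |f| < 1, f(0)=0, and f'(0)=b. Then |f(z₀) − c| ≤ r, where c = z₀ b (1−|z₀|²)/(1−|z₀ b|²) and r = |z₀|² (1−|b|²)/(1−|z₀ b|²) (Rogosinski's lemma). -/
/-!
The difference quotient `g = dslope f 0` maps the unit disk into the closed unit disk and
`g 0 = b`. Schwarz's lemma applied to the Möbius transform `(g - b) / (1 - conj b * g)` puts
`g z₀` in the pseudo-hyperbolic disk `‖u - b‖ ≤ t * ‖1 - conj b * u‖` with `t = ‖z₀‖`, and this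
is the Euclidean disk with center `b (1 - t²) / (1 - t² ‖b‖²)` and radius
`t (1 - ‖b‖²) / (1 - t² ‖b‖²)`. Since `f z₀ = z₀ * g z₀`, scaling by `z₀` gives the claim.
-/

open Complex Metric Set ComplexConjugate

theorem normSq_one_sub_conj_mul_sub_normSq_sub (b w : ℂ) :
    normSq (1 - conj b * w) - normSq (w - b) = (1 - normSq w) * (1 - normSq b) := by
  simp only [normSq_apply, sub_re, sub_im, mul_re, mul_im, one_re, one_im, conj_re, conj_im]
  ring

theorem norm_sub_le_norm_one_sub_conj_mul {b w : ℂ} (hb : ‖b‖ ≤ 1) (hw : ‖w‖ ≤ 1) :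
    ‖w - b‖ ≤ ‖1 - conj b * w‖ := by
  have hw' : normSq w ≤ 1 := by rw [← Complex.sq_norm]; exact pow_le_one₀ (norm_nonneg w) hw
  have hb' : normSq b ≤ 1 := by rw [← Complex.sq_norm]; exact pow_le_one₀ (norm_nonneg b) hb
  refine (pow_le_pow_iff_left₀ (norm_nonneg _) (norm_nonneg _) two_ne_zero).1 ?_
  rw [Complex.sq_norm, Complex.sq_norm, ← sub_nonneg, normSq_one_sub_conj_mul_sub_normSq_sub]
  exact mul_nonneg (sub_nonneg.2 hw') (sub_nonneg.2 hb')

theorem one_sub_conj_mul_ne_zero {b w : ℂ} (hb : ‖b‖ < 1) (hw : ‖w‖ ≤ 1) :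
    1 - conj b * w ≠ 0 := by
  refine sub_ne_zero.2 fun h => ?_
  have : ‖conj b * w‖ < 1 := by
    rw [norm_mul, RCLike.norm_conj]
    exact (mul_le_of_le_one_right (norm_nonneg b) hw).trans_lt hb
  simp [← h] at this

theorem norm_sub_le_norm_mul_norm_one_sub_conj_mul {g : ℂ → ℂ} {z : ℂ}
    (hd : DifferentiableOn ℂ g (ball 0 1)) (h_maps : MapsTo g (ball 0 1) (closedBall 0 1))
    (hg₀ : ‖g 0‖ < 1) (hz : ‖z‖ < 1) :
    ‖g z - g 0‖ ≤ ‖z‖ * ‖1 - conj (g 0) * g z‖ := by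
  have hg : ∀ w ∈ ball (0 : ℂ) 1, ‖g w‖ ≤ 1 := fun w hw => by
    simpa using h_maps hw
  have hden : ∀ w ∈ ball (0 : ℂ) 1, 1 - conj (g 0) * g w ≠ 0 := fun w hw =>
    one_sub_conj_mul_ne_zero hg₀ (hg w hw)
  set H : ℂ → ℂ := fun w => (g w - g 0) / (1 - conj (g 0) * g w)
  have hHd : DifferentiableOn ℂ H (ball 0 1) :=
    (hd.sub_const _).div ((differentiableOn_const _).sub ((differentiableOn_const _).mul hd)) hden
  have hH_maps : MapsTo H (ball 0 1) (closedBall 0 1) := fun w hw => by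
    rw [mem_closedBall_zero_iff, norm_div, div_le_one (norm_pos_iff.2 (hden w hw))]
    exact norm_sub_le_norm_one_sub_conj_mul hg₀.le (hg w hw)
  have hH := norm_le_norm_of_mapsTo_ball hHd hH_maps (by simp [H]) hz
  rwa [norm_div, div_le_iff₀ (norm_pos_iff.2 (hden z (mem_ball_zero_iff.2 hz)))] at hH

theorem normSq_mul_sub_mul_sub_sq (u b : ℂ) (t : ℝ) :
    normSq ((1 - t ^ 2 * normSq b : ℝ) * u - b * (1 - t ^ 2 : ℝ)) - (t * (1 - normSq b)) ^ 2 =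
      (1 - t ^ 2 * normSq b) * (normSq (u - b) - t ^ 2 * normSq (1 - conj b * u)) := by
  simp only [normSq_apply, sub_re, sub_im, mul_re, mul_im, one_re, one_im, conj_re, conj_im,
    ofReal_re, ofReal_im]
  ring

theorem norm_sub_center_le_of_norm_sub_le_mul {u b : ℂ} {t : ℝ} (ht₀ : 0 ≤ t) (ht : t < 1)
    (hb : ‖b‖ ≤ 1) (h : ‖u - b‖ ≤ t * ‖1 - conj b * u‖) :
    ‖u - b * (1 - t ^ 2 : ℝ) / (1 - t ^ 2 * ‖b‖ ^ 2 : ℝ)‖ ≤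
      t * (1 - ‖b‖ ^ 2) / (1 - t ^ 2 * ‖b‖ ^ 2) := by
  have hD : 0 < 1 - t ^ 2 * ‖b‖ ^ 2 := by
    have : t ^ 2 * ‖b‖ ^ 2 < 1 := by
      rw [← mul_pow]
      exact pow_lt_one₀ (by positivity) ((mul_le_of_le_one_right ht₀ hb).trans_lt ht) two_ne_zero
    linarith
  have hr : 0 ≤ t * (1 - ‖b‖ ^ 2) := mul_nonneg ht₀ (by nlinarith [norm_nonneg b])
  have h2 : ‖u - b‖ ^ 2 ≤ t ^ 2 * ‖1 - conj b * u‖ ^ 2 := by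
    rw [← mul_pow]; exact pow_le_pow_left₀ (norm_nonneg _) h 2
  have key : ‖((1 - t ^ 2 * ‖b‖ ^ 2 : ℝ) : ℂ) * u - b * (1 - t ^ 2 : ℝ)‖ ≤ t * (1 - ‖b‖ ^ 2) := by
    refine (pow_le_pow_iff_left₀ (norm_nonneg _) hr two_ne_zero).1 ?_
    have := normSq_mul_sub_mul_sub_sq u b t
    simp only [← Complex.sq_norm] at this h2 ⊢
    nlinarith
  have hDc : ((1 - t ^ 2 * ‖b‖ ^ 2 : ℝ) : ℂ) ≠ 0 := ofReal_ne_zero.2 hD.ne'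
  rw [← mul_div_cancel_left₀ u hDc, ← sub_div, norm_div, norm_real, Real.norm_of_nonneg hD.le]
  exact div_le_div_of_nonneg_right key hD.le

theorem stmt19 (z₀ b : ℂ) (hz₀ : ‖z₀‖ < 1) (hb : ‖b‖ < 1) (f : ℂ → ℂ)
    (hf : DifferentiableOn ℂ f (ball (0:ℂ) 1))
    (hlt : ∀ z ∈ ball (0:ℂ) 1, ‖f z‖ < 1)
    (h0 : f 0 = 0) (h1 : deriv f 0 = b) :
    ‖f z₀ - z₀ * b * ((1 - ‖z₀‖ ^ 2 : ℝ) : ℂ) / ((1 - ‖z₀ * b‖ ^ 2 : ℝ) : ℂ)‖ ≤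
      ‖z₀‖ ^ 2 * (1 - ‖b‖ ^ 2) / (1 - ‖z₀ * b‖ ^ 2) := by
  have hf_maps : MapsTo f (ball 0 1) (closedBall (f 0) 1) := fun z hz => by
    simpa [h0] using (hlt z hz).le
  have hg_maps : MapsTo (dslope f 0) (ball 0 1) (closedBall 0 1) := fun z hz => by
    simpa using norm_dslope_le_div_of_mapsTo_ball hf hf_maps hz
  have hg₀ : dslope f 0 0 = b := by rw [dslope_same, h1]
  have hpick := norm_sub_le_norm_mul_norm_one_sub_conj_mul
    ((differentiableOn_dslope (ball_mem_nhds _ one_pos)).2 hf) hg_maps (hg₀ ▸ hb) hz₀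
  rw [hg₀] at hpick
  have hdisk := norm_sub_center_le_of_norm_sub_le_mul (norm_nonneg z₀) hz₀ hb.le hpick
  have hfg : f z₀ = z₀ * dslope f 0 z₀ := by simpa [h0] using (sub_smul_dslope f 0 z₀).symm
  calc ‖f z₀ - z₀ * b * ((1 - ‖z₀‖ ^ 2 : ℝ) : ℂ) / ((1 - ‖z₀ * b‖ ^ 2 : ℝ) : ℂ)‖
      = ‖z₀‖ * ‖dslope f 0 z₀ - b * (1 - ‖z₀‖ ^ 2 : ℝ) / (1 - ‖z₀‖ ^ 2 * ‖b‖ ^ 2 : ℝ)‖ := by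
        rw [← norm_mul, hfg, norm_mul, mul_pow]; ring_nf
    _ ≤ ‖z₀‖ * (‖z₀‖ * (1 - ‖b‖ ^ 2) / (1 - ‖z₀‖ ^ 2 * ‖b‖ ^ 2)) := by gcongr
    _ = ‖z₀‖ ^ 2 * (1 - ‖b‖ ^ 2) / (1 - ‖z₀ * b‖ ^ 2) := by rw [norm_mul, mul_pow]; ring
end
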